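/- Let F_vex, F_cav : ℝⁿ → ℝ and let (w_t)_{t≥0} be a sequence in ℝⁿ such that for each t ≥ 0 there exists g_t ∈ ℝⁿ with F_cav(w) ≤ F_cav(w_t) + ⟨g_t, w − w_t⟩ for all w ∈ ℝⁿ, and w_{t+1} minimizes the function w ↦ F_vex(w) + ⟨g_t, w⟩ over ℝⁿ. Then the sequence of objective values F_vex(w_t) + F_cav(w_t) is monotonically nonincreasing in t. -/

import Mathlib

open scoped RealInnerProductSpace

/-- The surrogate `z ↦ f z + g x + ⟪v, z - x⟫` majorizes `f + g` and agrees with it at `x`,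
so its minimizer `y` cannot increase `f + g`. -/
theorem cccp_step_objective_le {E : Type*} [NormedAddCommGroup E]
    [InnerProductSpace ℝ E] {f g : E → ℝ} {x y v : E}
    (hsupergrad : g y ≤ g x + ⟪v, y - x⟫) (hmin : f y + ⟪v, y⟫ ≤ f x + ⟪v, x⟫) :
    f y + g y ≤ f x + g x := by
  rw [inner_sub_right] at hsupergrad
  linarith

/-- Theorem III.2 (descent property of Algorithm 1): if at each step `t` the
concave part `F_cav` is linearized at `w_t` by a supergradient `g_t` and
`w_{t+1}` minimizes the convex surrogate `w ↦ F_vex(w) + ⟨g_t, w⟩`, then the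
sequence of objective values `F_vex(w_t) + F_cav(w_t)` is monotonically
nonincreasing. -/
theorem cccp_objective_antitone {n : ℕ}
    (Fvex Fcav : EuclideanSpace ℝ (Fin n) → ℝ)
    (w : ℕ → EuclideanSpace ℝ (Fin n))
    (h : ∀ t : ℕ, ∃ g : EuclideanSpace ℝ (Fin n),
      (∀ w', Fcav w' ≤ Fcav (w t) + (inner ℝ g (w' - w t) : ℝ)) ∧
      (∀ w', Fvex (w (t + 1)) + (inner ℝ g (w (t + 1)) : ℝ)
        ≤ Fvex w' + (inner ℝ g w' : ℝ))) :
    Antitone (fun t => Fvex (w t) + Fcav (w t)) := by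
  refine antitone_nat_of_succ_le fun t => ?_
  obtain ⟨g, hcav, hvex⟩ := h t
  exact cccp_step_objective_le (hcav (w (t + 1))) (hvex (w t))
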